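/- Let x, y, z₁, …, z_t, w ∈ L, integers c₁, …, c_t, and ε ∈ {1, −1} satisfy [x, y] = Σ_{v=1}^t c_v z_v, [x, [x, y]] = 2ε·w, [x, w] = 0, [y, z_v] = 0, [y, w] = 0, [z_v, w] = 0 and [z_v, z_{v'}] = 0 for all v, v'. Then for all a, b ∈ A and r, s ∈ ℤ_{≥0}, the following identity holds in U(L ⊗ A): (x ⊗ a)^{(r)} (y ⊗ b)^{(s)} = Σ_{j₁, j₂ ≥ 0, j₁+j₂ ≤ s, j₁+2j₂ ≤ r} (y ⊗ b)^{(s−j₁−j₂)} · ε^{j₂} (w ⊗ a²b)^{(j₂)} · ( Σ_{ψ : [t]→ℤ_{≥0}, Σ_v ψ(v) = j₁} Π_{v=1}^t c_v^{ψ(v)} (z_v ⊗ ab)^{(ψ(v))} ) · (x ⊗ a)^{(r−j₁−2j₂)} (the factors z_v ⊗ ab commute, so the products are well defined). -/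

import Mathlib

open scoped TensorProduct

noncomputable section

set_option linter.unusedSectionVars false
set_option linter.unusedVariables false

namespace MapSuper

variable (A : Type*) [DecidableEq A]

/-- `|χ|`, the total size of a finitely supported multiset `χ ∈ 𝓕 = (A →₀ ℕ)`. -/
def wt (χ : A →₀ ℕ) : ℕ := χ.sum fun _ n => n

lemma wt_add (χ φ : A →₀ ℕ) : wt A (χ + φ) = wt A χ + wt A φ :=
  Finsupp.sum_add_index' (fun _ => rfl) (fun _ _ _ => rfl)

lemma wt_pos {ψ : A →₀ ℕ} (h : ψ ≠ 0) : 0 < wt A ψ := by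
  rcases Nat.eq_zero_or_pos (wt A ψ) with h0 | h1
  · exfalso
    apply h
    ext a
    by_cases ha : a ∈ ψ.support
    · exact Finset.sum_eq_zero_iff.mp h0 a ha
    · simpa using Finsupp.notMem_support_iff.mp ha
  · exact h1

lemma wt_sub_lt {χ ψ : A →₀ ℕ} (hle : ψ ≤ χ) (hne : ψ ≠ 0) : wt A (χ - ψ) < wt A χ := by
  have h1 : wt A (χ - ψ) + wt A ψ = wt A χ := by
    rw [← wt_add, tsub_add_cancel_of_le hle]
  have := wt_pos A hne
  omega

/-- The multinomial coefficient `m(ψ) = |ψ|! / ∏_a ψ(a)!`. -/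
def mc (ψ : A →₀ ℕ) : ℕ := Nat.multinomial ψ.support ψ

variable [CommRing A] [Algebra ℂ A]
variable (L : Type*) [LieRing L] [LieAlgebra ℂ L]

/-- `π(ψ) = ∏_a a^{ψ(a)} ∈ A`. -/
def piF (ψ : A →₀ ℕ) : A := ψ.prod fun a n => a ^ n

instance : LieAlgebra ℂ (A ⊗[ℂ] L) where
  lie_smul c x y := by
    rw [← algebraMap_smul A c y, lie_smul, algebraMap_smul]

/-- The universal enveloping algebra `U(L ⊗ A)` of the map Lie algebra `L ⊗ A`
(realized as `A ⊗[ℂ] L` with bracket `⁅x ⊗ a, y ⊗ b⁆ = ⁅x, y⁆ ⊗ ab`). -/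
abbrev UEA := UniversalEnvelopingAlgebra ℂ (A ⊗[ℂ] L)

/-- The element `x ⊗ a` of `U(L ⊗ A)`. -/
def emb (x : L) (a : A) : UEA A L := UniversalEnvelopingAlgebra.ι ℂ (a ⊗ₜ[ℂ] x)

/-- The divided power `u^{(r)} = u^r / r!`. -/
def dp (u : UEA A L) (r : ℕ) : UEA A L := ((r.factorial : ℂ)⁻¹) • u ^ r

/-- The elements `p_h(χ)`, defined recursively by `p_h(0) = 1` and, for `χ ≠ 0`,
`p_h(χ) = -(1/|χ|) ∑_{0 ≠ ψ ≤ χ} m(ψ) (h ⊗ π(ψ)) p_h(χ - ψ)`. -/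
def p (h : L) (χ : A →₀ ℕ) : UEA A L :=
  if hχ : χ = 0 then 1
  else (-(1 / (wt A χ : ℂ))) •
    ∑ ψ ∈ ((Finset.Iic χ).erase 0).attach,
      (mc A ψ.1 : ℂ) • (emb A L h (piF A ψ.1) * p h (χ - ψ.1))
termination_by wt A χ
decreasing_by
  have hm := ψ.2
  rw [Finset.mem_erase, Finset.mem_Iic] at hm
  exact wt_sub_lt A hm.2 hm.1

lemma commute_emb {x y : L} (hxy : ⁅x, y⁆ = 0) (a b : A) :
    Commute (emb A L x a) (emb A L y b) := by
  unfold emb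
  letI : LieRing (UEA A L) := LieRing.ofAssociativeRing
  rw [commute_iff_lie_eq, ← LieHom.map_lie, LieAlgebra.ExtendScalars.bracket_tmul, hxy,
    TensorProduct.tmul_zero, map_zero]

lemma commute_dp {x y : L} (hxy : ⁅x, y⁆ = 0) (a b : A) (r s : ℕ) :
    Commute (dp A L (emb A L x a) r) (dp A L (emb A L y b) s) :=
  (((commute_emb A L hxy a b).pow_pow r s).smul_left _).smul_right _

lemma commute_smul_dp {x y : L} (hxy : ⁅x, y⁆ = 0) (c d : ℂ) (a b : A) (r s : ℕ) :
    Commute (dp A L (c • emb A L x a) r) (dp A L (d • emb A L y b) s) :=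
  (((((commute_emb A L hxy a b).smul_left c).smul_right d).pow_pow r s).smul_left _).smul_right _

lemma commute_smul_dp' {x y : L} (hxy : ⁅x, y⁆ = 0) (c d : ℂ) (a b : A) (r s : ℕ) :
    Commute (c • dp A L (emb A L x a) r) (d • dp A L (emb A L y b) s) :=
  ((commute_dp A L hxy a b r s).smul_left c).smul_right d

/-- The submodule of elements of `U(L ⊗ A)` of degree at most `n`: the image, under the
canonical map `T(L ⊗ A) → U(L ⊗ A)`, of the sum of the homogeneous components of the tensor
algebra of degree at most `n`. -/
def degLE (n : ℕ) : Submodule ℂ (UEA A L) :=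
  Submodule.map (UniversalEnvelopingAlgebra.mkAlgHom ℂ (A ⊗[ℂ] L)).toLinearMap
    (⨆ i ∈ Set.Iic n,
      (LinearMap.range (TensorAlgebra.ι ℂ : (A ⊗[ℂ] L) →ₗ[ℂ] TensorAlgebra ℂ (A ⊗[ℂ] L))) ^ i)

/-- `C(z, k) = z(z-1)⋯(z-k+1)/k!`. -/
def intC (z : ℤ) (k : ℕ) : ℂ :=
  (∏ i ∈ Finset.range k, ((z : ℂ) - (i : ℂ))) / (k.factorial : ℂ)

/-- Garland's elements `D^x_{j,k}(d, c) = ∑_{λ ∈ 𝓟_k(j)} ∏_{m ∈ supp λ} (x ⊗ d^m c)^{(λ(m))}`,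
where `𝓟_k(j)` is the set of finitely supported `λ : ℕ → ℕ` with `∑_m λ(m)·m = j` and
`∑_m λ(m) = k`. -/
def D (x : L) (j k : ℕ) (d c : A) : UEA A L :=
  ∑ᶠ (lam : ℕ →₀ ℕ) (_ : lam.sum (fun m t => t * m) = j ∧ lam.sum (fun _ t => t) = k),
    lam.support.noncommProd (fun m => dp A L (emb A L x (d ^ m * c)) (lam m))
      (fun m _ m' _ _ => commute_dp A L (lie_self x) _ _ _ _)


/-! ### Auxiliary lemmas for Statement 9 -/

lemma cast_factorial_ne_zero (n : ℕ) : ((n.factorial : ℕ) : ℂ) ≠ 0 :=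
  Nat.cast_ne_zero.mpr n.factorial_ne_zero

lemma dp_zero (u : UEA A L) : dp A L u 0 = 1 := by
  simp [dp]

lemma fact_scalar (k : ℕ) :
    ((k + 1 : ℕ) : ℂ) * (((k+1).factorial : ℕ) : ℂ)⁻¹ = ((k.factorial : ℕ) : ℂ)⁻¹ := by
  have h1 := cast_factorial_ne_zero k
  have h2 := cast_factorial_ne_zero (k+1)
  rw [Nat.factorial_succ] at h2 ⊢
  push_cast at h2 ⊢
  field_simp

lemma mul_dp_succ (u : UEA A L) (k : ℕ) :
    u * dp A L u k = ((k + 1 : ℕ) : ℂ) • dp A L u (k+1) := by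
  unfold dp
  rw [mul_smul_comm, smul_smul, fact_scalar]
  congr 1
  exact (pow_succ' u k).symm

lemma dp_succ_mul (u : UEA A L) (k : ℕ) :
    dp A L u k * u = ((k + 1 : ℕ) : ℂ) • dp A L u (k+1) := by
  unfold dp
  rw [smul_mul_assoc, smul_smul, fact_scalar]
  congr 1
  exact (pow_succ u k).symm

lemma mul_dp_succ' (u z : UEA A L) (k : ℕ) :
    u * (dp A L u k * z) = ((k + 1 : ℕ) : ℂ) • (dp A L u (k+1) * z) := by
  rw [← mul_assoc, mul_dp_succ, smul_mul_assoc]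

lemma dp_succ_mul' (u z : UEA A L) (k : ℕ) :
    dp A L u k * (u * z) = ((k + 1 : ℕ) : ℂ) • (dp A L u (k+1) * z) := by
  rw [← mul_assoc, dp_succ_mul, smul_mul_assoc]

lemma mul_pow_basic (X Y N : UEA A L) (h : X * Y = Y * X + N) (hc : Y * N = N * Y) :
    ∀ m : ℕ, X * Y ^ (m+1) = Y ^ (m+1) * X + ((m + 1 : ℕ) : ℂ) • (Y ^ m * N)
  | 0 => by simpa using h
  | (m+1) => by
    have ih := mul_pow_basic X Y N h hc m
    calc X * Y ^ (m+2) = (X * Y ^ (m+1)) * Y := by rw [pow_succ, ← mul_assoc]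
      _ = (Y ^ (m+1) * X + ((m + 1 : ℕ) : ℂ) • (Y ^ m * N)) * Y := by rw [ih]
      _ = Y ^ (m+1) * (X * Y) + ((m + 1 : ℕ) : ℂ) • (Y ^ m * (N * Y)) := by
          rw [add_mul, smul_mul_assoc, mul_assoc, mul_assoc]
      _ = Y ^ (m+1) * (Y * X + N) + ((m + 1 : ℕ) : ℂ) • ((Y ^ m * Y) * N) := by
          rw [h, ← hc, mul_assoc]
      _ = Y ^ (m+2) * X + ((m + 2 : ℕ) : ℂ) • (Y ^ (m+1) * N) := by
          rw [mul_add, ← mul_assoc, ← pow_succ, ← pow_succ]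
          push_cast
          module

/-- "Predecessor" divided power: `dpp u m = dp u (m-1)` for `m ≥ 1`, and `0` for `m = 0`. -/
def dpp (u : UEA A L) : ℕ → UEA A L
  | 0 => 0
  | (m+1) => dp A L u m

@[simp] lemma dpp_zero (u : UEA A L) : dpp A L u 0 = 0 := rfl
@[simp] lemma dpp_succ (u : UEA A L) (m : ℕ) : dpp A L u (m+1) = dp A L u m := rfl

lemma mul_dpp (X Y N : UEA A L) (h : X * Y = Y * X + N) (hc : Y * N = N * Y) (m : ℕ) :
    X * dp A L Y m = dp A L Y m * X + dpp A L Y m * N := by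
  cases m with
  | zero => simp [dp_zero]
  | succ m =>
    show X * dp A L Y (m+1) = dp A L Y (m+1) * X + dp A L Y m * N
    unfold dp
    rw [mul_smul_comm, mul_pow_basic A L X Y N h hc m, smul_add, smul_smul, mul_comm,
      fact_scalar, smul_mul_assoc, smul_mul_assoc]

lemma sum_succ_shift {M : Type*} [AddCommMonoid M] (n : ℕ) (f : ℕ → M)
    (h0 : f 0 = 0) (htop : f (n+1) = 0) :
    ∑ i ∈ Finset.range (n+1), f (i+1) = ∑ i ∈ Finset.range (n+1), f i := by
  have h1 := Finset.sum_range_succ' f (n+1)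
  have h2 := Finset.sum_range_succ f (n+1)
  rw [h0, add_zero] at h1
  rw [htop, add_zero] at h2
  rw [← h1, h2]

section Straight

variable (X Y N W : UEA A L) (e : ℂ) (s : ℕ)

/-- The generic straightened term. -/
def Tm (r j₁ j₂ : ℕ) : UEA A L :=
  dp A L Y (s - j₁ - j₂) * (e ^ j₂ • dp A L W j₂) * dp A L N j₁ * dp A L X (r - j₁ - 2*j₂)

/-- The generic straightened term, guarded by the summation condition. -/
def gg (r j₁ j₂ : ℕ) : UEA A L :=
  if j₁ + j₂ ≤ s ∧ j₁ + 2*j₂ ≤ r then Tm A L X Y N W e s r j₁ j₂ else 0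

def B1 (r j₁ j₂ : ℕ) : UEA A L :=
  if j₁ + j₂ ≤ s ∧ j₁ + 2*j₂ ≤ r + 1 then
    (((r + 1) - (j₁ + 2*j₂) : ℕ) : ℂ) • Tm A L X Y N W e s (r+1) j₁ j₂ else 0

def C2 (r j₁ j₂ : ℕ) : UEA A L :=
  if j₁ + j₂ ≤ s ∧ j₁ + 2*j₂ ≤ r + 1 then
    ((2 * j₂ : ℕ) : ℂ) • Tm A L X Y N W e s (r+1) j₁ j₂ else 0

def C3 (r j₁ j₂ : ℕ) : UEA A L :=
  if j₁ + j₂ ≤ s ∧ j₁ + 2*j₂ ≤ r + 1 then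
    ((j₁ : ℕ) : ℂ) • Tm A L X Y N W e s (r+1) j₁ j₂ else 0

/-- Shifted version of `C2`. -/
def C2' (r j₁ j₂ : ℕ) : UEA A L :=
  match j₁ with
  | 0 => 0
  | (n+1) => C2 A L X Y N W e s r n (j₂+1)

/-- Shifted version of `C3`. -/
def C3' (r j₁ j₂ : ℕ) : UEA A L :=
  C3 A L X Y N W e s r (j₁+1) j₂

variable (hXY : X * Y = Y * X + N)
  (hXN : X * N = N * X + (2 * e) • W)
  (hYN : Y * N = N * Y) (hYW : Y * W = W * Y)
  (hNW : N * W = W * N) (hXW : X * W = W * X)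

include hXY hXN hYN hYW hNW hXW in
lemma pointwise (r j₁ j₂ : ℕ) :
    X * gg A L X Y N W e s r j₁ j₂ =
      B1 A L X Y N W e s r j₁ j₂ + C2' A L X Y N W e s r j₁ j₂ +
        C3' A L X Y N W e s r j₁ j₂ := by
  by_cases hcond : j₁ + j₂ ≤ s ∧ j₁ + 2*j₂ ≤ r
  · -- main case
    obtain ⟨h1, h2⟩ := hcond
    have cXW : Commute X W := hXW
    have cNW : Commute N W := hNW
    have cXE : Commute X (e ^ j₂ • dp A L W j₂) :=
      ((cXW.pow_right j₂).smul_right _).smul_right _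
    have cNE : Commute N (e ^ j₂ • dp A L W j₂) :=
      ((cNW.pow_right j₂).smul_right _).smul_right _
    have cWdppN : Commute W (dpp A L N j₁) := by
      cases j₁ with
      | zero => simp only [dpp_zero]; exact Commute.zero_right W
      | succ n => exact (((cNW.symm).pow_right n).smul_right _)
    -- rewriting helpers
    have hYz : ∀ zz : UEA A L, X * (dp A L Y (s - j₁ - j₂) * zz) =
        dp A L Y (s - j₁ - j₂) * (X * zz) + dpp A L Y (s - j₁ - j₂) * (N * zz) := fun zz => by
      rw [← mul_assoc, mul_dpp A L X Y N hXY hYN, add_mul, mul_assoc, mul_assoc]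
    have hNmul : N * ((2 * e) • W) = ((2 * e) • W) * N := by
      rw [mul_smul_comm, smul_mul_assoc, hNW]
    have hNz : ∀ zz : UEA A L, X * (dp A L N j₁ * zz) =
        dp A L N j₁ * (X * zz) + (2 * e) • (dpp A L N j₁ * (W * zz)) := fun zz => by
      rw [← mul_assoc, mul_dpp A L X N ((2 * e) • W) hXN hNmul, add_mul, mul_assoc, mul_assoc]
      congr 1
      rw [smul_mul_assoc, mul_smul_comm]
    have hEz : ∀ zz : UEA A L, X * ((e ^ j₂ • dp A L W j₂) * zz) =
        (e ^ j₂ • dp A L W j₂) * (X * zz) := fun zz => by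
      rw [← mul_assoc, cXE.eq, mul_assoc]
    have hNEz : ∀ zz : UEA A L, N * ((e ^ j₂ • dp A L W j₂) * zz) =
        (e ^ j₂ • dp A L W j₂) * (N * zz) := fun zz => by
      rw [← mul_assoc, cNE.eq, mul_assoc]
    -- the left-hand side, fully expanded
    have hL : X * (dp A L Y (s - j₁ - j₂) * ((e ^ j₂ • dp A L W j₂) *
          (dp A L N j₁ * dp A L X (r - j₁ - 2*j₂)))) =
        (((r - j₁ - 2*j₂) + 1 : ℕ) : ℂ) • (dp A L Y (s - j₁ - j₂) * ((e ^ j₂ • dp A L W j₂) *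
            (dp A L N j₁ * dp A L X ((r - j₁ - 2*j₂) + 1)))) +
          (2 * e * (e ^ j₂ * ((j₂ + 1 : ℕ) : ℂ))) • (dp A L Y (s - j₁ - j₂) *
            (dp A L W (j₂+1) * (dpp A L N j₁ * dp A L X (r - j₁ - 2*j₂)))) +
          ((j₁ + 1 : ℕ) : ℂ) • (dpp A L Y (s - j₁ - j₂) * ((e ^ j₂ • dp A L W j₂) *
            (dp A L N (j₁+1) * dp A L X (r - j₁ - 2*j₂)))) := by
      have hWmove : dpp A L N j₁ * (W * dp A L X (r - j₁ - 2*j₂)) =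
          W * (dpp A L N j₁ * dp A L X (r - j₁ - 2*j₂)) := by
        rw [← mul_assoc, ← cWdppN.eq, mul_assoc]
      rw [hYz, hEz, hNEz, hNz, mul_dp_succ,
        mul_dp_succ' A L N (dp A L X (r - j₁ - 2*j₂)) j₁, hWmove]
      simp only [smul_mul_assoc, mul_smul_comm, smul_smul, mul_add, mul_assoc]
      rw [dp_succ_mul' A L W (dpp A L N j₁ * dp A L X (r - j₁ - 2*j₂)) j₂]
      simp only [smul_mul_assoc, mul_smul_comm, smul_smul]
      module
    rw [gg, if_pos ⟨h1, h2⟩, Tm, mul_assoc, mul_assoc, hL]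
    congr 1
    · congr 1
      · -- B1 = first term
        rw [B1, if_pos (⟨h1, by omega⟩ : j₁ + j₂ ≤ s ∧ j₁ + 2*j₂ ≤ r + 1), Tm,
          mul_assoc, mul_assoc]
        have e1 : (r + 1) - j₁ - 2*j₂ = (r - j₁ - 2*j₂) + 1 := by omega
        have e2 : (r + 1) - (j₁ + 2*j₂) = (r - j₁ - 2*j₂) + 1 := by omega
        rw [e1, e2]
      · -- C2' = second term
        cases j₁ with
        | zero => simp [C2']
        | succ n =>
          show _ = C2 A L X Y N W e s r n (j₂+1)
          rw [C2, if_pos (⟨by omega, by omega⟩ : n + (j₂+1) ≤ s ∧ n + 2*(j₂+1) ≤ r + 1), Tm,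
            mul_assoc, mul_assoc]
          have e1 : s - n - (j₂+1) = s - (n+1) - j₂ := by omega
          have e2 : (r+1) - n - 2*(j₂+1) = r - (n+1) - 2*j₂ := by omega
          rw [e1, e2, dpp_succ]
          simp only [mul_smul_comm, smul_mul_assoc, smul_smul, mul_assoc]
          congr 1
          push_cast
          ring
    · -- C3' = third term
      rw [C3', C3]
      by_cases hs : (j₁+1) + j₂ ≤ s
      · rw [if_pos (⟨hs, by omega⟩ : (j₁+1) + j₂ ≤ s ∧ (j₁+1) + 2*j₂ ≤ r + 1), Tm,
          mul_assoc, mul_assoc]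
        have e1 : (r+1) - (j₁+1) - 2*j₂ = r - j₁ - 2*j₂ := by omega
        have e2 : s - j₁ - j₂ = (s - (j₁+1) - j₂) + 1 := by omega
        rw [e1, e2, dpp_succ]
      · rw [if_neg (fun h => hs h.1)]
        have e0 : s - j₁ - j₂ = 0 := by omega
        rw [e0, dpp_zero, zero_mul, smul_zero]
  · -- condition fails: everything vanishes
    rw [gg, if_neg hcond, mul_zero]
    have hB1 : B1 A L X Y N W e s r j₁ j₂ = 0 := by
      rw [B1]
      split_ifs with h
      · have : (r + 1) - (j₁ + 2*j₂) = 0 := by omega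
        rw [this, Nat.cast_zero, zero_smul]
      · rfl
    have hC2 : C2' A L X Y N W e s r j₁ j₂ = 0 := by
      cases j₁ with
      | zero => rfl
      | succ n =>
        show C2 A L X Y N W e s r n (j₂+1) = 0
        rw [C2, if_neg (fun h => hcond ⟨by omega, by omega⟩)]
    have hC3 : C3' A L X Y N W e s r j₁ j₂ = 0 := by
      rw [C3', C3, if_neg (fun h => hcond ⟨by omega, by omega⟩)]
    rw [hB1, hC2, hC3, add_zero, add_zero]

lemma merge (r j₁ j₂ : ℕ) :
    B1 A L X Y N W e s r j₁ j₂ + C2 A L X Y N W e s r j₁ j₂ + C3 A L X Y N W e s r j₁ j₂ =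
      ((r + 1 : ℕ) : ℂ) • gg A L X Y N W e s (r+1) j₁ j₂ := by
  unfold B1 C2 C3 gg
  split_ifs with h
  · rw [← add_smul, ← add_smul, ← Nat.cast_add, ← Nat.cast_add]
    congr 1
    exact Nat.cast_inj.mpr (by omega)
  · simp only [add_zero, smul_zero]

lemma C2_coeff_zero (r j₁ : ℕ) : C2 A L X Y N W e s r j₁ 0 = 0 := by
  unfold C2
  split_ifs <;> simp

lemma C2_cond_fail (r j₁ j₂ : ℕ) (h : s < j₁ + j₂) : C2 A L X Y N W e s r j₁ j₂ = 0 := by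
  unfold C2
  rw [if_neg]
  omega

lemma C3_coeff_zero (r j₂ : ℕ) : C3 A L X Y N W e s r 0 j₂ = 0 := by
  unfold C3
  split_ifs <;> simp

lemma C3_cond_fail (r j₁ j₂ : ℕ) (h : s < j₁ + j₂) : C3 A L X Y N W e s r j₁ j₂ = 0 := by
  unfold C3
  rw [if_neg]
  omega

lemma shift_C2 (r : ℕ) :
    (∑ j₁ ∈ Finset.range (s+1), ∑ j₂ ∈ Finset.range (s+1), C2' A L X Y N W e s r j₁ j₂) =
      ∑ j₁ ∈ Finset.range (s+1), ∑ j₂ ∈ Finset.range (s+1), C2 A L X Y N W e s r j₁ j₂ := by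
  rw [Finset.sum_comm]
  calc (∑ j₂ ∈ Finset.range (s+1), ∑ j₁ ∈ Finset.range (s+1), C2' A L X Y N W e s r j₁ j₂)
      = ∑ j₂ ∈ Finset.range (s+1), ∑ j₁ ∈ Finset.range (s+1), C2 A L X Y N W e s r j₁ (j₂+1) := by
        refine Finset.sum_congr rfl fun j₂ _ => ?_
        rw [Finset.sum_range_succ' (fun j₁ => C2' A L X Y N W e s r j₁ j₂) s,
          Finset.sum_range_succ (fun j₁ => C2 A L X Y N W e s r j₁ (j₂+1)) s]
        rw [C2_cond_fail A L X Y N W e s r s (j₂+1) (by omega)]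
        rfl
    _ = ∑ j₁ ∈ Finset.range (s+1), ∑ j₂ ∈ Finset.range (s+1), C2 A L X Y N W e s r j₁ (j₂+1) :=
        Finset.sum_comm
    _ = ∑ j₁ ∈ Finset.range (s+1), ∑ j₂ ∈ Finset.range (s+1), C2 A L X Y N W e s r j₁ j₂ := by
        refine Finset.sum_congr rfl fun j₁ _ => ?_
        exact sum_succ_shift s (fun j₂ => C2 A L X Y N W e s r j₁ j₂)
          (C2_coeff_zero A L X Y N W e s r j₁)
          (C2_cond_fail A L X Y N W e s r j₁ (s+1) (by omega))

lemma shift_C3 (r : ℕ) :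
    (∑ j₁ ∈ Finset.range (s+1), ∑ j₂ ∈ Finset.range (s+1), C3' A L X Y N W e s r j₁ j₂) =
      ∑ j₁ ∈ Finset.range (s+1), ∑ j₂ ∈ Finset.range (s+1), C3 A L X Y N W e s r j₁ j₂ := by
  rw [Finset.sum_comm]
  calc (∑ j₂ ∈ Finset.range (s+1), ∑ j₁ ∈ Finset.range (s+1), C3' A L X Y N W e s r j₁ j₂)
      = ∑ j₂ ∈ Finset.range (s+1), ∑ j₁ ∈ Finset.range (s+1), C3 A L X Y N W e s r j₁ j₂ := by
        refine Finset.sum_congr rfl fun j₂ _ => ?_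
        exact sum_succ_shift s (fun j₁ => C3 A L X Y N W e s r j₁ j₂)
          (C3_coeff_zero A L X Y N W e s r j₂)
          (C3_cond_fail A L X Y N W e s r (s+1) j₂ (by omega))
    _ = ∑ j₁ ∈ Finset.range (s+1), ∑ j₂ ∈ Finset.range (s+1), C3 A L X Y N W e s r j₁ j₂ :=
        Finset.sum_comm

include hXY hXN hYN hYW hNW hXW in
lemma straight :
    ∀ r : ℕ, dp A L X r * dp A L Y s =
      ∑ j₁ ∈ Finset.range (s+1), ∑ j₂ ∈ Finset.range (s+1), gg A L X Y N W e s r j₁ j₂ := by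
  intro r
  induction r with
  | zero =>
    rw [dp_zero, one_mul]
    symm
    rw [Finset.sum_eq_single_of_mem 0 (Finset.mem_range.mpr (by omega))
      (fun b _ hb => Finset.sum_eq_zero fun j₂ _ => by
        unfold gg; rw [if_neg]; omega)]
    rw [Finset.sum_eq_single_of_mem 0 (Finset.mem_range.mpr (by omega))
      (fun b _ hb => by unfold gg; rw [if_neg]; omega)]
    unfold gg Tm
    rw [if_pos ⟨by omega, by omega⟩]
    simp [dp_zero]
  | succ r ih =>
    have hfact : ((r + 1 : ℕ) : ℂ) ≠ 0 := Nat.cast_ne_zero.mpr (Nat.succ_ne_zero r)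
    have key : X * (∑ j₁ ∈ Finset.range (s+1), ∑ j₂ ∈ Finset.range (s+1),
        gg A L X Y N W e s r j₁ j₂) =
        ((r + 1 : ℕ) : ℂ) • ∑ j₁ ∈ Finset.range (s+1), ∑ j₂ ∈ Finset.range (s+1),
          gg A L X Y N W e s (r+1) j₁ j₂ := by
      rw [Finset.mul_sum]
      calc (∑ j₁ ∈ Finset.range (s+1),
              X * ∑ j₂ ∈ Finset.range (s+1), gg A L X Y N W e s r j₁ j₂)
          = ∑ j₁ ∈ Finset.range (s+1), ∑ j₂ ∈ Finset.range (s+1),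
              (B1 A L X Y N W e s r j₁ j₂ + C2' A L X Y N W e s r j₁ j₂ +
                C3' A L X Y N W e s r j₁ j₂) := by
            refine Finset.sum_congr rfl fun j₁ _ => ?_
            rw [Finset.mul_sum]
            exact Finset.sum_congr rfl fun j₂ _ =>
              pointwise A L X Y N W e s hXY hXN hYN hYW hNW hXW r j₁ j₂
        _ = ((∑ j₁ ∈ Finset.range (s+1), ∑ j₂ ∈ Finset.range (s+1),
                B1 A L X Y N W e s r j₁ j₂) +
              ∑ j₁ ∈ Finset.range (s+1), ∑ j₂ ∈ Finset.range (s+1),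
                C2' A L X Y N W e s r j₁ j₂) +
              ∑ j₁ ∈ Finset.range (s+1), ∑ j₂ ∈ Finset.range (s+1),
                C3' A L X Y N W e s r j₁ j₂ := by
            simp only [Finset.sum_add_distrib]
        _ = ((∑ j₁ ∈ Finset.range (s+1), ∑ j₂ ∈ Finset.range (s+1),
                B1 A L X Y N W e s r j₁ j₂) +
              ∑ j₁ ∈ Finset.range (s+1), ∑ j₂ ∈ Finset.range (s+1),
                C2 A L X Y N W e s r j₁ j₂) +
              ∑ j₁ ∈ Finset.range (s+1), ∑ j₂ ∈ Finset.range (s+1),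
                C3 A L X Y N W e s r j₁ j₂ := by
            rw [shift_C2, shift_C3]
        _ = ∑ j₁ ∈ Finset.range (s+1), ∑ j₂ ∈ Finset.range (s+1),
              (B1 A L X Y N W e s r j₁ j₂ + C2 A L X Y N W e s r j₁ j₂ +
                C3 A L X Y N W e s r j₁ j₂) := by
            simp only [Finset.sum_add_distrib]
        _ = ∑ j₁ ∈ Finset.range (s+1), ∑ j₂ ∈ Finset.range (s+1),
              ((r + 1 : ℕ) : ℂ) • gg A L X Y N W e s (r+1) j₁ j₂ := by
            exact Finset.sum_congr rfl fun j₁ _ => Finset.sum_congr rfl fun j₂ _ =>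
              merge A L X Y N W e s r j₁ j₂
        _ = ((r + 1 : ℕ) : ℂ) • ∑ j₁ ∈ Finset.range (s+1), ∑ j₂ ∈ Finset.range (s+1),
              gg A L X Y N W e s (r+1) j₁ j₂ := by
            simp only [Finset.smul_sum]
    have lhs : X * (dp A L X r * dp A L Y s) =
        ((r + 1 : ℕ) : ℂ) • (dp A L X (r+1) * dp A L Y s) := by
      rw [← mul_assoc, mul_dp_succ, smul_mul_assoc]
    rw [ih, key] at lhs
    exact ((IsUnit.mk0 _ hfact).smul_left_cancel.mp lhs).symm

end Straight

/-! ### Lie-algebraic computations in `U(L ⊗ A)` -/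

lemma emb_mul (x y : L) (p q : A) :
    emb A L x p * emb A L y q = emb A L y q * emb A L x p + emb A L ⁅x, y⁆ (p * q) := by
  have h : emb A L x p * emb A L y q - emb A L y q * emb A L x p = emb A L ⁅x, y⁆ (p * q) := by
    letI : LieRing (UEA A L) := LieRing.ofAssociativeRing
    rw [← Ring.lie_def]
    unfold emb
    rw [← LieHom.map_lie, LieAlgebra.ExtendScalars.bracket_tmul]
  rw [add_comm]
  exact sub_eq_iff_eq_add.mp h

lemma emb_zsmul_sum {n : ℕ} (f : Fin n → L) (cc : Fin n → ℤ) (p : A) :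
    emb A L (∑ v, cc v • f v) p = ∑ v, (cc v : ℂ) • emb A L (f v) p := by
  letI : LieRing (UEA A L) := LieRing.ofAssociativeRing
  show (UniversalEnvelopingAlgebra.ι ℂ).toLinearMap (p ⊗ₜ[ℂ] (∑ v, cc v • f v)) = _
  rw [TensorProduct.tmul_sum, map_sum]
  refine Finset.sum_congr rfl fun v _ => ?_
  rw [← Int.cast_smul_eq_zsmul ℂ, TensorProduct.tmul_smul, map_smul]
  rfl

/-- Pull scalars out of a noncommutative product of pairwise commuting factors. -/
lemma noncommProd_smul {ι : Type*} (sfin : Finset ι) (α : ι → ℂ) (f : ι → UEA A L)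
    (comm : (sfin : Set ι).Pairwise (Function.onFun Commute f)) (comm') :
    sfin.noncommProd (fun i => α i • f i) comm' =
      (∏ i ∈ sfin, α i) • sfin.noncommProd f comm := by
  have commA : (sfin : Set ι).Pairwise
      (Function.onFun Commute (fun i => algebraMap ℂ (UEA A L) (α i))) :=
    fun i _ j _ _ => Algebra.commutes (α i) _
  have commAf : (sfin : Set ι).Pairwise fun x y =>
      Commute (f x) (algebraMap ℂ (UEA A L) (α y)) :=
    fun i _ j _ _ => (Algebra.commutes (α j) (f i)).symm
  calc sfin.noncommProd (fun i => α i • f i) comm'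
      = sfin.noncommProd ((fun i => algebraMap ℂ (UEA A L) (α i)) * f)
          (Finset.noncommProd_mul_distrib_aux commA comm commAf) :=
        Finset.noncommProd_congr rfl
          (fun i _ => by rw [Pi.mul_apply, Algebra.smul_def]) _
    _ = sfin.noncommProd (fun i => algebraMap ℂ (UEA A L) (α i)) commA *
          sfin.noncommProd f comm :=
        Finset.noncommProd_mul_distrib _ _ commA comm commAf
    _ = algebraMap ℂ (UEA A L) (∏ i ∈ sfin, α i) * sfin.noncommProd f comm := by
        congr 1
        rw [← Finset.noncommProd_eq_prod]
        exact (Finset.map_noncommProd sfin α (fun _ _ _ _ _ => Commute.all _ _)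
          (algebraMap ℂ (UEA A L))).symm
    _ = (∏ i ∈ sfin, α i) • sfin.noncommProd f comm := (Algebra.smul_def _ _).symm

lemma emb_zero (p : A) : emb A L 0 p = 0 := by
  letI : LieRing (UEA A L) := LieRing.ofAssociativeRing
  show (UniversalEnvelopingAlgebra.ι ℂ).toLinearMap (p ⊗ₜ[ℂ] (0 : L)) = 0
  rw [TensorProduct.tmul_zero, map_zero]

lemma emb_csmul (m : ℂ) (x : L) (p : A) : emb A L (m • x) p = m • emb A L x p := by
  letI : LieRing (UEA A L) := LieRing.ofAssociativeRing
  show (UniversalEnvelopingAlgebra.ι ℂ).toLinearMap (p ⊗ₜ[ℂ] (m • x)) = _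
  rw [TensorProduct.tmul_smul, map_smul]
  rfl

lemma emb_csum {n : ℕ} (f : Fin n → L) (p : A) :
    emb A L (∑ v, f v) p = ∑ v, emb A L (f v) p := by
  letI : LieRing (UEA A L) := LieRing.ofAssociativeRing
  show (UniversalEnvelopingAlgebra.ι ℂ).toLinearMap (p ⊗ₜ[ℂ] (∑ v, f v)) = _
  rw [TensorProduct.tmul_sum, map_sum]
  rfl

lemma emb_zsmul (m : ℤ) (x : L) (p : A) : emb A L (m • x) p = (m : ℂ) • emb A L x p := by
  rw [← Int.cast_smul_eq_zsmul ℂ, emb_csmul]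

/-- The multinomial theorem for the divided powers of `N = ∑ᵥ cᵥ • (zᵥ ⊗ ab)`. -/
lemma psi_sum (t : ℕ) (z : Fin t → L) (c : Fin t → ℤ) (hzz : ∀ v v', ⁅z v, z v'⁆ = 0)
    (ab : A) (j₁ : ℕ) :
    (∑ᶠ (ψ : Fin t → ℕ) (_ : ∑ v, ψ v = j₁),
      Finset.univ.noncommProd
        (fun v => ((c v : ℂ) ^ ψ v) • dp A L (emb A L (z v) ab) (ψ v))
        (fun v _ v' _ _ => commute_smul_dp' A L (hzz v v') _ _ _ _ _ _)) =
    dp A L (∑ v, (c v : ℂ) • emb A L (z v) ab) j₁ := by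
  classical
  have hcomm : ((Finset.univ : Finset (Fin t)) : Set (Fin t)).Pairwise
      (Function.onFun Commute (fun v => (c v : ℂ) • emb A L (z v) ab)) :=
    fun v _ v' _ h => ((commute_emb A L (hzz v v') ab ab).smul_left _).smul_right _
  have hcommP : ((Finset.univ : Finset (Fin t)) : Set (Fin t)).Pairwise
      (Function.onFun Commute (fun v => emb A L (z v) ab)) :=
    fun v _ v' _ h => commute_emb A L (hzz v v') ab ab
  rw [finsum_cond_eq_sum_of_cond_iff _
    (t := Finset.piAntidiag Finset.univ j₁)
    (fun {ψ} _ => by simp [Finset.mem_piAntidiag])]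
  rw [dp, Finset.sum_pow_eq_sum_piAntidiag_of_commute Finset.univ _ hcomm j₁, Finset.smul_sum]
  refine Finset.sum_congr rfl fun k hk => ?_
  have hks : ∑ v, k v = j₁ := by
    simpa using (Finset.mem_piAntidiag.mp hk).1
  -- rewrite both sides as scalars times the same noncommutative product
  have hL : Finset.univ.noncommProd
        (fun v => ((c v : ℂ) ^ k v) • dp A L (emb A L (z v) ab) (k v))
        (fun v _ v' _ _ => commute_smul_dp' A L (hzz v v') _ _ _ _ _ _) =
      (∏ v, ((c v : ℂ) ^ k v * (((k v).factorial : ℕ) : ℂ)⁻¹)) •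
        Finset.univ.noncommProd (fun v => emb A L (z v) ab ^ k v)
          (fun v hv v' hv' h => (hcommP hv hv' h).pow_pow _ _) := by
    rw [← noncommProd_smul A L Finset.univ _ _
      (fun v hv v' hv' h => (hcommP hv hv' h).pow_pow _ _)]
    exact Finset.noncommProd_congr rfl
      (fun v _ => by rw [dp, smul_smul]) _
  have hR : Finset.univ.noncommProd
        (fun v => ((c v : ℂ) • emb A L (z v) ab) ^ k v)
        ((hcomm.mono' fun _ _ h => h.pow_pow _ _)) =
      (∏ v, (c v : ℂ) ^ k v) •
        Finset.univ.noncommProd (fun v => emb A L (z v) ab ^ k v)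
          (fun v hv v' hv' h => (hcommP hv hv' h).pow_pow _ _) := by
    rw [← noncommProd_smul A L Finset.univ _ _
      (fun v hv v' hv' h => (hcommP hv hv' h).pow_pow _ _)]
    exact Finset.noncommProd_congr rfl (fun v _ => by rw [smul_pow]) _
  rw [hL, hR, ← nsmul_eq_mul, ← Nat.cast_smul_eq_nsmul ℂ, smul_smul, smul_smul]
  congr 1
  rw [Finset.prod_mul_distrib, Finset.prod_inv_distrib]
  have hfact' : (∏ v, (((k v).factorial : ℕ) : ℂ)) *
      ((Nat.multinomial Finset.univ k : ℕ) : ℂ) = ((j₁.factorial : ℕ) : ℂ) := by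
    rw [← Nat.cast_prod, ← Nat.cast_mul]
    exact congrArg _ (by rw [Nat.multinomial_spec, hks])
  have h1 : (∏ v, (((k v).factorial : ℕ) : ℂ)) ≠ 0 :=
    Finset.prod_ne_zero_iff.mpr fun v _ => cast_factorial_ne_zero (k v)
  have h2 := cast_factorial_ne_zero j₁
  field_simp
  linear_combination (-(∏ v, (c v : ℂ) ^ k v)) * hfact'

/-- straightening identity for `(x ⊗ a)^{(r)} (y ⊗ b)^{(s)}` when
`⁅x, y⁆ = ∑_v c_v z_v` and `⁅x, ⁅x, y⁆⁆ = 2 ε w`. -/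
theorem stmt9 (t : ℕ) (x y w : L) (z : Fin t → L) (c : Fin t → ℤ) (ε : ℤ)
    (hε : ε = 1 ∨ ε = -1)
    (hxy : ⁅x, y⁆ = ∑ v, c v • z v)
    (hxxy : ⁅x, ⁅x, y⁆⁆ = (2 * ε) • w)
    (hxw : ⁅x, w⁆ = 0) (hyz : ∀ v, ⁅y, z v⁆ = 0) (hyw : ⁅y, w⁆ = 0)
    (hzw : ∀ v, ⁅z v, w⁆ = 0) (hzz : ∀ v v', ⁅z v, z v'⁆ = 0)
    (a b : A) (r s : ℕ) :
    dp A L (emb A L x a) r * dp A L (emb A L y b) s =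
      ∑ᶠ (j₁ : ℕ) (j₂ : ℕ) (_ : j₁ + j₂ ≤ s ∧ j₁ + 2 * j₂ ≤ r),
        dp A L (emb A L y b) (s - j₁ - j₂) *
          (((ε : ℂ) ^ j₂) • dp A L (emb A L w (a ^ 2 * b)) j₂) *
          (∑ᶠ (ψ : Fin t → ℕ) (_ : ∑ v, ψ v = j₁),
            Finset.univ.noncommProd
              (fun v => ((c v : ℂ) ^ ψ v) • dp A L (emb A L (z v) (a * b)) (ψ v))
              (fun v _ v' _ _ => commute_smul_dp' A L (hzz v v') _ _ _ _ _ _)) *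
          dp A L (emb A L x a) (r - j₁ - 2 * j₂) := by
  classical
  -- the key elements
  have hXY : emb A L x a * emb A L y b =
      emb A L y b * emb A L x a + ∑ v, (c v : ℂ) • emb A L (z v) (a * b) := by
    rw [emb_mul, hxy, emb_zsmul_sum]
  have hbr : ∑ v, (c v : ℂ) • ⁅x, z v⁆ = (2 * (ε : ℂ)) • w := by
    have h1 : ⁅x, ∑ v, (c v : ℂ) • z v⁆ = ∑ v, ⁅x, (c v : ℂ) • z v⁆ :=
      map_sum (AddMonoidHom.mk' (fun u => ⁅x, u⁆) (lie_add x)) _ _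
    have h2 : (∑ v, (c v : ℂ) • z v) = ∑ v, c v • z v :=
      Finset.sum_congr rfl fun v _ => Int.cast_smul_eq_zsmul ℂ (c v) (z v)
    calc ∑ v, (c v : ℂ) • ⁅x, z v⁆ = ∑ v, ⁅x, (c v : ℂ) • z v⁆ :=
          Finset.sum_congr rfl fun v _ => (lie_smul _ _ _).symm
      _ = ⁅x, ∑ v, (c v : ℂ) • z v⁆ := h1.symm
      _ = ⁅x, ⁅x, y⁆⁆ := by rw [h2, ← hxy]
      _ = (2 * ε) • w := hxxy
      _ = (2 * (ε : ℂ)) • w := by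
          rw [← Int.cast_smul_eq_zsmul ℂ (2 * ε) w]
          push_cast
          ring_nf
  have hXN : emb A L x a * (∑ v, (c v : ℂ) • emb A L (z v) (a * b)) =
      (∑ v, (c v : ℂ) • emb A L (z v) (a * b)) * emb A L x a +
        (2 * (ε : ℂ)) • emb A L w (a ^ 2 * b) := by
    have haab : a * (a * b) = a ^ 2 * b := by ring
    calc emb A L x a * (∑ v, (c v : ℂ) • emb A L (z v) (a * b))
        = ∑ v, ((c v : ℂ) • (emb A L (z v) (a * b) * emb A L x a) +
            (c v : ℂ) • emb A L ((c v : ℂ)⁻¹ • ((c v : ℂ) • ⁅x, z v⁆)) (a ^ 2 * b)) := by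
          rw [Finset.mul_sum]
          refine Finset.sum_congr rfl fun v _ => ?_
          rw [mul_smul_comm, emb_mul, smul_add, haab]
          by_cases hc0 : (c v : ℂ) = 0
          · rw [hc0]
            simp [emb_zero]
          · rw [inv_smul_smul₀ hc0]
      _ = (∑ v, (c v : ℂ) • emb A L (z v) (a * b)) * emb A L x a +
          (2 * (ε : ℂ)) • emb A L w (a ^ 2 * b) := by
          rw [Finset.sum_add_distrib]
          congr 1
          · rw [Finset.sum_mul]
            exact Finset.sum_congr rfl fun v _ => (smul_mul_assoc _ _ _).symm
          · have : ∀ v : Fin t, (c v : ℂ) • emb A L ((c v : ℂ)⁻¹ • ((c v : ℂ) • ⁅x, z v⁆))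
                (a ^ 2 * b) = emb A L ((c v : ℂ) • ⁅x, z v⁆) (a ^ 2 * b) := by
              intro v
              by_cases hc0 : (c v : ℂ) = 0
              · rw [hc0]
                simp [emb_zero]
              · rw [emb_csmul, emb_csmul, smul_smul, smul_smul, mul_inv_cancel₀ hc0, one_mul]
            rw [Finset.sum_congr rfl fun v _ => this v, ← emb_csum, hbr, emb_csmul]
  have hYN : emb A L y b * (∑ v, (c v : ℂ) • emb A L (z v) (a * b)) =
      (∑ v, (c v : ℂ) • emb A L (z v) (a * b)) * emb A L y b :=
    (Commute.sum_right _ _ _ fun v _ =>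
      (commute_emb A L (hyz v) b (a * b)).smul_right _).eq
  have hNW : (∑ v, (c v : ℂ) • emb A L (z v) (a * b)) * emb A L w (a ^ 2 * b) =
      emb A L w (a ^ 2 * b) * (∑ v, (c v : ℂ) • emb A L (z v) (a * b)) :=
    (Commute.sum_left _ _ _ fun v _ =>
      (commute_emb A L (hzw v) (a * b) (a ^ 2 * b)).smul_left _).eq
  have hYW : emb A L y b * emb A L w (a ^ 2 * b) =
      emb A L w (a ^ 2 * b) * emb A L y b := (commute_emb A L hyw b (a ^ 2 * b)).eq
  have hXW : emb A L x a * emb A L w (a ^ 2 * b) =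
      emb A L w (a ^ 2 * b) * emb A L x a := (commute_emb A L hxw a (a ^ 2 * b)).eq
  rw [straight A L (emb A L x a) (emb A L y b) (∑ v, (c v : ℂ) • emb A L (z v) (a * b))
    (emb A L w (a ^ 2 * b)) (ε : ℂ) s hXY hXN hYN hYW hNW hXW r]
  symm
  -- convert the finsum to a finite double sum
  calc (∑ᶠ (j₁ : ℕ) (j₂ : ℕ) (_ : j₁ + j₂ ≤ s ∧ j₁ + 2 * j₂ ≤ r),
        dp A L (emb A L y b) (s - j₁ - j₂) *
          (((ε : ℂ) ^ j₂) • dp A L (emb A L w (a ^ 2 * b)) j₂) *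
          (∑ᶠ (ψ : Fin t → ℕ) (_ : ∑ v, ψ v = j₁),
            Finset.univ.noncommProd
              (fun v => ((c v : ℂ) ^ ψ v) • dp A L (emb A L (z v) (a * b)) (ψ v))
              (fun v _ v' _ _ => commute_smul_dp' A L (hzz v v') _ _ _ _ _ _)) *
          dp A L (emb A L x a) (r - j₁ - 2 * j₂))
      = ∑ᶠ (j₁ : ℕ), ∑ j₂ ∈ Finset.range (s+1),
          (if j₁ + j₂ ≤ s ∧ j₁ + 2 * j₂ ≤ r then
            dp A L (emb A L y b) (s - j₁ - j₂) *
              (((ε : ℂ) ^ j₂) • dp A L (emb A L w (a ^ 2 * b)) j₂) *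
              (∑ᶠ (ψ : Fin t → ℕ) (_ : ∑ v, ψ v = j₁),
                Finset.univ.noncommProd
                  (fun v => ((c v : ℂ) ^ ψ v) • dp A L (emb A L (z v) (a * b)) (ψ v))
                  (fun v _ v' _ _ => commute_smul_dp' A L (hzz v v') _ _ _ _ _ _)) *
              dp A L (emb A L x a) (r - j₁ - 2 * j₂)
          else 0) := by
        refine finsum_congr fun j₁ => ?_
        rw [← finsum_eq_sum_of_support_subset _ (s := Finset.range (s+1)) ?hsupp]
        · exact finsum_congr fun j₂ => finsum_eq_if
        · intro j₂ hj₂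
          simp only [Function.mem_support, ne_eq] at hj₂
          simp only [Finset.coe_range, Set.mem_Iio]
          by_contra hc0
          exact hj₂ (if_neg (by omega))
    _ = ∑ j₁ ∈ Finset.range (s+1), ∑ j₂ ∈ Finset.range (s+1),
          (if j₁ + j₂ ≤ s ∧ j₁ + 2 * j₂ ≤ r then
            dp A L (emb A L y b) (s - j₁ - j₂) *
              (((ε : ℂ) ^ j₂) • dp A L (emb A L w (a ^ 2 * b)) j₂) *
              (∑ᶠ (ψ : Fin t → ℕ) (_ : ∑ v, ψ v = j₁),
                Finset.univ.noncommProd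
                  (fun v => ((c v : ℂ) ^ ψ v) • dp A L (emb A L (z v) (a * b)) (ψ v))
                  (fun v _ v' _ _ => commute_smul_dp' A L (hzz v v') _ _ _ _ _ _)) *
              dp A L (emb A L x a) (r - j₁ - 2 * j₂)
          else 0) := by
        refine finsum_eq_sum_of_support_subset _ ?_
        intro j₁ hj₁
        simp only [Function.mem_support, ne_eq] at hj₁
        simp only [Finset.coe_range, Set.mem_Iio]
        by_contra hc0
        exact hj₁ (Finset.sum_eq_zero fun j₂ _ => if_neg (by omega))
    _ = ∑ j₁ ∈ Finset.range (s+1), ∑ j₂ ∈ Finset.range (s+1),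
          gg A L (emb A L x a) (emb A L y b) (∑ v, (c v : ℂ) • emb A L (z v) (a * b))
            (emb A L w (a ^ 2 * b)) (ε : ℂ) s r j₁ j₂ := by
        refine Finset.sum_congr rfl fun j₁ _ => Finset.sum_congr rfl fun j₂ _ => ?_
        rw [psi_sum A L t z c hzz (a * b) j₁]
        rw [gg, Tm]

end MapSuper
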